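/- arXiv:2112.14255 — 3 statements merged into one kernel-verified Lean document; each statement's English description precedes it below -/
import Mathlib

section
/- For real μ > 1, the function I₁(x) = ∫₀^π e^{x(cos θ - 1)} sin^{μ-2} θ dθ satisfies I₁(x) ≤ C (1+x)^{-(μ-1)/2} for all x ≥ 0, where C depends only on μ. -/
open Real MeasureTheory Set intervalIntegral

lemma aux_sin_le (ν : ℝ) {θ : ℝ} (h0 : 0 ≤ θ) (hπ : θ ≤ π) :
    Real.sin θ ^ ν ≤ max 1 ((2/π)^ν) * (θ ^ ν + (π - θ) ^ ν) := by
  have hM1 : (1:ℝ) ≤ max 1 ((2/π)^ν) := le_max_left _ _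
  have hθν : 0 ≤ θ ^ ν := Real.rpow_nonneg h0 ν
  have hπθν : 0 ≤ (π - θ) ^ ν := Real.rpow_nonneg (by linarith) ν
  rcases le_or_gt 0 ν with hν | hν
  · have h1 : Real.sin θ ^ ν ≤ θ ^ ν :=
      Real.rpow_le_rpow (Real.sin_nonneg_of_nonneg_of_le_pi h0 hπ) (Real.sin_le h0) hν
    nlinarith
  · -- ν < 0
    have hM2 : (2/π)^ν ≤ max 1 ((2/π)^ν) := le_max_right _ _
    rcases eq_or_lt_of_le h0 with h0' | h0'
    · rw [← h0', Real.sin_zero, Real.zero_rpow hν.ne]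
      exact mul_nonneg (le_trans zero_le_one hM1)
        (add_nonneg le_rfl (Real.rpow_nonneg (by linarith [Real.pi_pos]) ν))
    rcases eq_or_lt_of_le hπ with hπ' | hπ'
    · rw [hπ', Real.sin_pi, Real.zero_rpow hν.ne]
      exact mul_nonneg (le_trans zero_le_one hM1)
        (add_nonneg (Real.rpow_nonneg Real.pi_pos.le ν) (Real.rpow_nonneg (by linarith) ν))
    rcases le_or_gt θ (π/2) with hh | hh
    · have hs : 2/π * θ ≤ Real.sin θ := Real.mul_le_sin h0 hh
      have hpos : 0 < 2/π * θ := by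
        have := Real.pi_pos; positivity
      have h1 : Real.sin θ ^ ν ≤ (2/π * θ) ^ ν :=
        Real.rpow_le_rpow_of_nonpos hpos hs hν.le
      rw [Real.mul_rpow (by positivity : (0:ℝ) ≤ 2/π) h0] at h1
      have h2 : (2/π)^ν * θ ^ ν ≤ max 1 ((2/π)^ν) * (θ ^ ν + (π - θ) ^ ν) := by
        have := Real.rpow_nonneg (by positivity : (0:ℝ) ≤ 2/π) ν
        nlinarith
      linarith
    · have hs : 2/π * (π - θ) ≤ Real.sin (π - θ) :=
        Real.mul_le_sin (by linarith) (by linarith)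
      rw [Real.sin_pi_sub] at hs
      have hpos : 0 < 2/π * (π - θ) := by
        have := Real.pi_pos
        have : 0 < π - θ := by linarith
        positivity
      have h1 : Real.sin θ ^ ν ≤ (2/π * (π - θ)) ^ ν :=
        Real.rpow_le_rpow_of_nonpos hpos hs hν.le
      rw [Real.mul_rpow (by positivity : (0:ℝ) ≤ 2/π) (by linarith : (0:ℝ) ≤ π - θ)] at h1
      have h2 : (2/π)^ν * (π - θ) ^ ν ≤ max 1 ((2/π)^ν) * (θ ^ ν + (π - θ) ^ ν) := by
        have := Real.rpow_nonneg (by positivity : (0:ℝ) ≤ 2/π) ν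
        nlinarith
      linarith

lemma aux_sin_le_half (ν : ℝ) {θ : ℝ} (h0 : 0 ≤ θ) (hπ : θ ≤ π/2) :
    Real.sin θ ^ ν ≤ max 1 ((2/π)^ν) * θ ^ ν := by
  have hM1 : (1:ℝ) ≤ max 1 ((2/π)^ν) := le_max_left _ _
  have hθν : 0 ≤ θ ^ ν := Real.rpow_nonneg h0 ν
  rcases le_or_gt 0 ν with hν | hν
  · have h1 : Real.sin θ ^ ν ≤ θ ^ ν :=
      Real.rpow_le_rpow (Real.sin_nonneg_of_nonneg_of_le_pi h0
        (by linarith [Real.pi_pos])) (Real.sin_le h0) hν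
    nlinarith
  · rcases eq_or_lt_of_le h0 with h0' | h0'
    · rw [← h0', Real.sin_zero, Real.zero_rpow hν.ne]
      simp
    · have hs : 2/π * θ ≤ Real.sin θ := Real.mul_le_sin h0 hπ
      have hpos : 0 < 2/π * θ := by have := Real.pi_pos; positivity
      have h1 : Real.sin θ ^ ν ≤ (2/π * θ) ^ ν :=
        Real.rpow_le_rpow_of_nonpos hpos hs hν.le
      rw [Real.mul_rpow (by positivity : (0:ℝ) ≤ 2/π) h0] at h1
      have : (2/π)^ν ≤ max 1 ((2/π)^ν) := le_max_right _ _
      nlinarith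


lemma aux_intable (ν : ℝ) (hν : -1 < ν) {x : ℝ} (hx : 0 ≤ x) :
    IntervalIntegrable (fun θ => Real.exp (x * (Real.cos θ - 1)) * Real.sin θ ^ ν)
      volume 0 π := by
  have hg : IntervalIntegrable
      (fun θ : ℝ => max 1 ((2/π)^ν) * (θ ^ ν + (π - θ) ^ ν)) volume 0 π := by
    apply IntervalIntegrable.const_mul
    apply IntervalIntegrable.add
    · exact intervalIntegral.intervalIntegrable_rpow' hν
    · have h := (intervalIntegral.intervalIntegrable_rpow' (a := 0) (b := π) hν).comp_sub_left π
      simpa using h.symm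
  rw [intervalIntegrable_iff_integrableOn_Ioc_of_le Real.pi_pos.le] at hg ⊢
  apply hg.mono' (by fun_prop : Measurable fun θ : ℝ =>
      Real.exp (x * (Real.cos θ - 1)) * Real.sin θ ^ ν).aestronglyMeasurable
  refine (ae_restrict_iff' measurableSet_Ioc).mpr (Filter.Eventually.of_forall fun θ hθ => ?_)
  have h1 : 0 ≤ Real.sin θ ^ ν :=
    Real.rpow_nonneg (Real.sin_nonneg_of_nonneg_of_le_pi hθ.1.le hθ.2) ν
  have h2 : Real.exp (x * (Real.cos θ - 1)) ≤ 1 := by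
    rw [Real.exp_le_one_iff]
    have := Real.cos_le_one θ
    nlinarith
  rw [Real.norm_eq_abs, abs_of_nonneg (by positivity)]
  calc Real.exp (x * (Real.cos θ - 1)) * Real.sin θ ^ ν ≤ 1 * Real.sin θ ^ ν :=
        mul_le_mul_of_nonneg_right h2 h1
    _ = Real.sin θ ^ ν := one_mul _
    _ ≤ _ := aux_sin_le ν hθ.1.le hθ.2

lemma aux_scale (ν : ℝ) {x : ℝ} (hx : 0 < x) :
    (∫ θ in Ioi (0:ℝ), θ ^ ν * Real.exp (-(2/π^2*x) * θ^2))
      = x ^ (-((ν+1)/2)) * ∫ u in Ioi (0:ℝ), u ^ ν * Real.exp (-(2/π^2) * u^2) := by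
  set c := Real.sqrt x with hc
  have hcpos : 0 < c := Real.sqrt_pos.mpr hx
  have key := MeasureTheory.integral_comp_mul_left_Ioi
    (fun u => u ^ ν * Real.exp (-(2/π^2) * u^2)) 0 hcpos
  simp only [mul_zero] at key
  have hlhs : (∫ θ in Ioi (0:ℝ), (c * θ) ^ ν * Real.exp (-(2/π^2) * (c * θ)^2))
      = ∫ θ in Ioi (0:ℝ), c ^ ν * (θ ^ ν * Real.exp (-(2/π^2*x) * θ^2)) := by
    apply MeasureTheory.setIntegral_congr_fun measurableSet_Ioi
    intro θ hθ
    have hθ0 : (0:ℝ) ≤ θ := (le_of_lt hθ)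
    dsimp only
    rw [Real.mul_rpow hcpos.le hθ0]
    have : c ^ 2 = x := Real.sq_sqrt hx.le
    ring_nf
    rw [this]
    ring_nf
  rw [hlhs, MeasureTheory.integral_const_mul] at key
  have hG := key
  -- key : c ^ ν * ∫ ... = c⁻¹ • ∫ u in Ioi 0, ...
  rw [smul_eq_mul] at hG
  have hcν : (0:ℝ) < c ^ ν := Real.rpow_pos_of_pos hcpos ν
  have : (∫ θ in Ioi (0:ℝ), θ ^ ν * Real.exp (-(2/π^2*x) * θ^2))
      = (c ^ ν)⁻¹ * c⁻¹ * ∫ u in Ioi (0:ℝ), u ^ ν * Real.exp (-(2/π^2) * u^2) := by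
    field_simp at hG ⊢
    linarith [hG]
  rw [this]
  congr 1
  rw [← Real.rpow_neg_one c, ← Real.rpow_neg hcpos.le, ← Real.rpow_add hcpos]
  rw [hc, Real.sqrt_eq_rpow, ← Real.rpow_mul hx.le]
  congr 1
  ring

lemma aux_exp_decay (p : ℝ) (hp : 0 ≤ p) {x : ℝ} (hx : 0 ≤ x) :
    Real.exp (-x) ≤ ((Nat.factorial (Nat.ceil p) : ℝ) * Real.exp 1) * (1 + x) ^ (-p) := by
  set n := Nat.ceil p with hn
  have h1x : (0:ℝ) < 1 + x := by linarith
  have h1 : (1+x) ^ p ≤ (1+x) ^ (n:ℝ) :=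
    Real.rpow_le_rpow_of_exponent_le (by linarith) (Nat.le_ceil p)
  have h2 : (1+x) ^ (n:ℝ) = (1+x) ^ n := Real.rpow_natCast _ n
  have h3 : (1+x) ^ n / (n.factorial : ℝ) ≤ Real.exp (1+x) := by
    calc (1+x) ^ n / (n.factorial : ℝ) ≤ ∑ i ∈ Finset.range (n+1), (1+x) ^ i / (i.factorial : ℝ) := by
          exact Finset.single_le_sum (f := fun i : ℕ => (1+x) ^ i / (i.factorial : ℝ))
            (fun i _ => by positivity) (Finset.self_mem_range_succ n)
      _ ≤ Real.exp (1+x) := Real.sum_le_exp_of_nonneg (by linarith) _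
  have hfac : (0:ℝ) < (n.factorial : ℝ) := by positivity
  have h4 : (1+x) ^ p ≤ (n.factorial : ℝ) * Real.exp (1+x) := by
    rw [div_le_iff₀ hfac] at h3
    calc (1+x) ^ p ≤ (1+x) ^ n := h2 ▸ h1
      _ ≤ Real.exp (1+x) * (n.factorial : ℝ) := h3
      _ = (n.factorial : ℝ) * Real.exp (1+x) := by ring
  rw [Real.rpow_neg h1x.le, ← div_eq_mul_inv, le_div_iff₀ (Real.rpow_pos_of_pos h1x p)]
  calc Real.exp (-x) * (1+x) ^ p ≤ Real.exp (-x) * ((n.factorial : ℝ) * Real.exp (1+x)) :=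
        mul_le_mul_of_nonneg_left h4 (Real.exp_pos _).le
    _ = (n.factorial : ℝ) * (Real.exp (-x) * Real.exp (1+x)) := by ring
    _ = (n.factorial : ℝ) * Real.exp 1 := by rw [← Real.exp_add]; ring_nf

lemma aux_rpow_cmp (p : ℝ) (hp : 0 ≤ p) {x : ℝ} (hx : 1 ≤ x) :
    x ^ (-p) ≤ 2 ^ p * (1 + x) ^ (-p) := by
  have hx0 : (0:ℝ) < x := by linarith
  have h1 : ((1+x)/x) ^ p ≤ 2 ^ p :=
    Real.rpow_le_rpow (by positivity) (by rw [div_le_iff₀ hx0]; linarith) hp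
  have heq : x ^ (-p) = ((1+x)/x) ^ p * (1+x) ^ (-p) := by
    rw [Real.div_rpow (by linarith) hx0.le, Real.rpow_neg hx0.le,
      Real.rpow_neg (by linarith : (0:ℝ) ≤ 1 + x)]
    have h2 : (0:ℝ) < (1+x) ^ p := Real.rpow_pos_of_pos (by linarith) p
    have h3 : (0:ℝ) < x ^ p := Real.rpow_pos_of_pos hx0 p
    field_simp
  rw [heq]
  exact mul_le_mul_of_nonneg_right h1
    (Real.rpow_nonneg (by positivity : (0:ℝ) ≤ 1+x) (-p))

lemma aux_one_le (p : ℝ) (hp : 0 ≤ p) {x : ℝ} (hx0 : 0 ≤ x) (hx : x ≤ 1) :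
    1 ≤ 2 ^ p * (1 + x) ^ (-p) := by
  have h1 : (2:ℝ) ^ (-p) ≤ (1+x) ^ (-p) :=
    Real.rpow_le_rpow_of_nonpos (by linarith) (by linarith) (by linarith)
  have h2 : (2:ℝ) ^ p * 2 ^ (-p) = 1 := by
    rw [← Real.rpow_add (by norm_num : (0:ℝ) < 2)]; simp
  nlinarith [Real.rpow_pos_of_pos (by norm_num : (0:ℝ) < 2) p]


set_option maxHeartbeats 2000000 in
/-- I₁(x) = ∫₀^π e^{x(cos θ - 1)} sin^{μ-2} θ dθ satisfies
I₁(x) ≤ C (1+x)^{-(μ-1)/2} for all x ≥ 0, with C depending only on μ > 1. -/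
theorem stmt3 (μ : ℝ) (hμ : 1 < μ) :
    ∃ C > 0, ∀ x : ℝ, 0 ≤ x →
      (∫ θ in (0:ℝ)..π, Real.exp (x * (Real.cos θ - 1)) * Real.sin θ ^ (μ - 2))
        ≤ C * (1 + x) ^ (-(μ - 1) / 2) := by
  have hπ := Real.pi_pos
  set ν : ℝ := μ - 2 with hνdef
  have hν : -1 < ν := by rw [hνdef]; linarith
  set p : ℝ := (μ - 1)/2 with hpdef
  have hp : 0 < p := by rw [hpdef]; linarith
  have hexpeq : -(μ - 1)/2 = -p := by rw [hpdef]; ring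
  set M : ℝ := max 1 ((2/π)^ν) with hMdef
  have hM1 : (1:ℝ) ≤ M := le_max_left _ _
  have hM0 : (0:ℝ) ≤ M := by linarith
  set B : ℝ := ∫ θ in (0:ℝ)..π, Real.sin θ ^ ν with hBdef
  set G : ℝ := ∫ u in Ioi (0:ℝ), u ^ ν * Real.exp (-(2/π^2) * u^2) with hGdef
  set K : ℝ := ((Nat.ceil p).factorial : ℝ) * Real.exp 1 with hKdef
  have hK : 0 < K := by rw [hKdef]; positivity
  have h2p : (0:ℝ) < 2 ^ p := Real.rpow_pos_of_pos two_pos p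
  have intble_sin : IntervalIntegrable (fun θ => Real.sin θ ^ ν) volume 0 π := by
    simpa using aux_intable ν hν (le_refl 0)
  have hB0 : 0 ≤ B := by
    rw [hBdef]
    apply intervalIntegral.integral_nonneg hπ.le
    intro θ hθ
    exact Real.rpow_nonneg (Real.sin_nonneg_of_nonneg_of_le_pi hθ.1 hθ.2) ν
  have hG0 : 0 ≤ G := by
    rw [hGdef]
    apply MeasureTheory.setIntegral_nonneg measurableSet_Ioi
    intro u hu
    exact mul_nonneg (Real.rpow_nonneg (le_of_lt hu) ν) (Real.exp_pos _).le
  refine ⟨2^p * B + M * 2^p * G + K * B + 1, ?_, ?_⟩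
  · nlinarith [mul_nonneg h2p.le hB0, mul_nonneg (mul_nonneg hM0 h2p.le) hG0,
      mul_nonneg hK.le hB0]
  intro x hx
  rw [hexpeq]
  have h1x : (0:ℝ) < 1 + x := by linarith
  have hpos_rpow : (0:ℝ) < (1+x) ^ (-p) := Real.rpow_pos_of_pos h1x _
  have hIB : (∫ θ in (0:ℝ)..π, Real.exp (x*(Real.cos θ - 1)) * Real.sin θ ^ ν) ≤ B := by
    rw [hBdef]
    apply intervalIntegral.integral_mono_on hπ.le (aux_intable ν hν hx) intble_sin
    intro θ hθ
    have h1 : Real.exp (x*(Real.cos θ - 1)) ≤ 1 := by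
      rw [Real.exp_le_one_iff]; nlinarith [Real.cos_le_one θ]
    have h2 : 0 ≤ Real.sin θ ^ ν :=
      Real.rpow_nonneg (Real.sin_nonneg_of_nonneg_of_le_pi hθ.1 hθ.2) ν
    nlinarith
  rcases le_or_gt x 1 with hx1 | hx1
  · -- small x
    have h1 := aux_one_le p hp.le hx hx1
    calc (∫ θ in (0:ℝ)..π, Real.exp (x*(Real.cos θ - 1)) * Real.sin θ ^ ν) ≤ B := hIB
      _ ≤ B * (2^p * (1+x)^(-p)) := le_mul_of_one_le_right hB0 h1
      _ ≤ (2^p * B + M * 2^p * G + K * B + 1) * (1+x)^(-p) := by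
          nlinarith [mul_nonneg (mul_nonneg (mul_nonneg hM0 h2p.le) hG0) hpos_rpow.le,
            mul_nonneg (mul_nonneg hK.le hB0) hpos_rpow.le, hpos_rpow.le]
  · -- large x
    have hx0 : (0:ℝ) < x := by linarith
    have sub1 : Set.uIcc (0:ℝ) (π/2) ⊆ Set.uIcc (0:ℝ) π := by
      apply Set.uIcc_subset_uIcc
      · exact Set.mem_uIcc.mpr (Or.inl ⟨le_rfl, hπ.le⟩)
      · exact Set.mem_uIcc.mpr (Or.inl ⟨by linarith, by linarith⟩)
    have sub2 : Set.uIcc (π/2) π ⊆ Set.uIcc (0:ℝ) π := by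
      apply Set.uIcc_subset_uIcc
      · exact Set.mem_uIcc.mpr (Or.inl ⟨by linarith, by linarith⟩)
      · exact Set.mem_uIcc.mpr (Or.inl ⟨by linarith, le_rfl⟩)
    have h1 : IntervalIntegrable (fun θ => Real.exp (x*(Real.cos θ - 1)) * Real.sin θ ^ ν)
        volume 0 (π/2) := (aux_intable ν hν hx).mono_set sub1
    have h2 : IntervalIntegrable (fun θ => Real.exp (x*(Real.cos θ - 1)) * Real.sin θ ^ ν)
        volume (π/2) π := (aux_intable ν hν hx).mono_set sub2
    have hsplit := (intervalIntegral.integral_add_adjacent_intervals h1 h2).symm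
    -- T2 bound
    have hT2 : (∫ θ in (π/2)..π, Real.exp (x*(Real.cos θ - 1)) * Real.sin θ ^ ν)
        ≤ (K * (1+x)^(-p)) * B := by
      have hT2a : (∫ θ in (π/2)..π, Real.exp (x*(Real.cos θ - 1)) * Real.sin θ ^ ν)
          ≤ ∫ θ in (π/2)..π, Real.exp (-x) * Real.sin θ ^ ν := by
        apply intervalIntegral.integral_mono_on (by linarith) h2
          ((intble_sin.mono_set sub2).const_mul _)
        intro θ hθ
        have hcos : Real.cos θ ≤ 0 :=
          Real.cos_nonpos_of_pi_div_two_le_of_le hθ.1 (by linarith [hθ.2])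
        have he : x*(Real.cos θ - 1) ≤ -x := by nlinarith [mul_nonneg hx (neg_nonneg.mpr hcos)]
        exact mul_le_mul_of_nonneg_right (Real.exp_le_exp.mpr he)
          (Real.rpow_nonneg (Real.sin_nonneg_of_nonneg_of_le_pi (by linarith [hθ.1]) hθ.2) ν)
      have hT2b : (∫ θ in (π/2)..π, Real.exp (-x) * Real.sin θ ^ ν)
          = Real.exp (-x) * ∫ θ in (π/2)..π, Real.sin θ ^ ν :=
        intervalIntegral.integral_const_mul _ _
      have hT2c : (∫ θ in (π/2)..π, Real.sin θ ^ ν) ≤ B := by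
        have hadd := intervalIntegral.integral_add_adjacent_intervals
          (intble_sin.mono_set sub1) (intble_sin.mono_set sub2)
        have h0' : 0 ≤ ∫ θ in (0:ℝ)..(π/2), Real.sin θ ^ ν := by
          apply intervalIntegral.integral_nonneg (by linarith)
          intro θ hθ
          exact Real.rpow_nonneg (Real.sin_nonneg_of_nonneg_of_le_pi hθ.1 (by linarith [hθ.2])) ν
        rw [hBdef]; linarith [hadd]
      have hdecay : Real.exp (-x) ≤ K * (1+x)^(-p) := by
        rw [hKdef]; exact aux_exp_decay p hp.le hx
      calc (∫ θ in (π/2)..π, Real.exp (x*(Real.cos θ - 1)) * Real.sin θ ^ ν)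
          ≤ Real.exp (-x) * ∫ θ in (π/2)..π, Real.sin θ ^ ν := by rw [← hT2b]; exact hT2a
        _ ≤ Real.exp (-x) * B := mul_le_mul_of_nonneg_left hT2c (Real.exp_pos _).le
        _ ≤ (K * (1+x)^(-p)) * B := mul_le_mul_of_nonneg_right hdecay hB0
    -- T1 bound
    have hb : (0:ℝ) < 2/π^2 * x := by positivity
    have hRint : IntegrableOn (fun θ : ℝ => θ^ν * Real.exp (-(2/π^2*x) * θ^2)) (Ioi 0) :=
      integrableOn_rpow_mul_exp_neg_mul_sq hb hν
    have hT1 : (∫ θ in (0:ℝ)..(π/2), Real.exp (x*(Real.cos θ - 1)) * Real.sin θ ^ ν)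
        ≤ M * 2^p * G * (1+x)^(-p) := by
      have hRint' : IntervalIntegrable
          (fun θ : ℝ => M * (θ^ν * Real.exp (-(2/π^2*x) * θ^2))) volume 0 (π/2) := by
        rw [intervalIntegrable_iff_integrableOn_Ioc_of_le (by linarith : (0:ℝ) ≤ π/2)]
        exact (hRint.mono_set Ioc_subset_Ioi_self).const_mul M
      have hT1a : (∫ θ in (0:ℝ)..(π/2), Real.exp (x*(Real.cos θ - 1)) * Real.sin θ ^ ν)
          ≤ ∫ θ in (0:ℝ)..(π/2), M * (θ^ν * Real.exp (-(2/π^2*x) * θ^2)) := by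
        apply intervalIntegral.integral_mono_on (by linarith) h1 hRint'
        intro θ hθ
        have habs : |θ| ≤ π := by rw [abs_of_nonneg hθ.1]; linarith [hθ.2]
        have hc := Real.cos_le_one_sub_mul_cos_sq habs
        have hstep : Real.cos θ - 1 ≤ -(2/π^2)*θ^2 := by nlinarith
        have e1 : x*(Real.cos θ - 1) ≤ -(2/π^2*x)*θ^2 := by
          have := mul_le_mul_of_nonneg_left hstep hx
          have heq : x*(-(2/π^2)*θ^2) = -(2/π^2*x)*θ^2 := by ring
          linarith [heq.le, heq.ge]
        have s1 : Real.sin θ ^ ν ≤ M * θ ^ ν := by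
          rw [hMdef]; exact aux_sin_le_half ν hθ.1 hθ.2
        calc Real.exp (x*(Real.cos θ - 1)) * Real.sin θ ^ ν
            ≤ Real.exp (-(2/π^2*x)*θ^2) * (M * θ ^ ν) :=
              mul_le_mul (Real.exp_le_exp.mpr e1) s1
                (Real.rpow_nonneg (Real.sin_nonneg_of_nonneg_of_le_pi hθ.1
                  (by linarith [hθ.2])) ν) (Real.exp_pos _).le
          _ = M * (θ^ν * Real.exp (-(2/π^2*x) * θ^2)) := by ring
      have hT1b : (∫ θ in (0:ℝ)..(π/2), M * (θ^ν * Real.exp (-(2/π^2*x) * θ^2)))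
          = M * ∫ θ in (0:ℝ)..(π/2), θ^ν * Real.exp (-(2/π^2*x) * θ^2) :=
        intervalIntegral.integral_const_mul _ _
      have hT1c : (∫ θ in (0:ℝ)..(π/2), θ^ν * Real.exp (-(2/π^2*x) * θ^2))
          ≤ ∫ θ in Ioi (0:ℝ), θ^ν * Real.exp (-(2/π^2*x) * θ^2) := by
        rw [intervalIntegral.integral_of_le (by linarith : (0:ℝ) ≤ π/2)]
        apply MeasureTheory.setIntegral_mono_set hRint
        · refine (ae_restrict_iff' measurableSet_Ioi).mpr (Filter.Eventually.of_forall ?_)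
          intro θ hθ
          exact mul_nonneg (Real.rpow_nonneg (le_of_lt hθ) ν) (Real.exp_pos _).le
        · exact HasSubset.Subset.eventuallyLE Ioc_subset_Ioi_self
      have hT1d := aux_scale ν hx0
      have hνp : -((ν+1)/2) = -p := by rw [hνdef, hpdef]; ring
      have hcmp := aux_rpow_cmp p hp.le hx1.le
      have hchain : (∫ θ in (0:ℝ)..(π/2), Real.exp (x*(Real.cos θ - 1)) * Real.sin θ ^ ν)
          ≤ M * (x^(-p) * G) := by
        calc (∫ θ in (0:ℝ)..(π/2), Real.exp (x*(Real.cos θ - 1)) * Real.sin θ ^ ν)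
            ≤ ∫ θ in (0:ℝ)..(π/2), M * (θ^ν * Real.exp (-(2/π^2*x) * θ^2)) := hT1a
          _ = M * ∫ θ in (0:ℝ)..(π/2), θ^ν * Real.exp (-(2/π^2*x) * θ^2) := hT1b
          _ ≤ M * ∫ θ in Ioi (0:ℝ), θ^ν * Real.exp (-(2/π^2*x) * θ^2) :=
              mul_le_mul_of_nonneg_left hT1c hM0
          _ = M * (x^(-p) * G) := by rw [hT1d, hνp, hGdef]
      have hfin := mul_le_mul_of_nonneg_left hcmp (mul_nonneg hM0 hG0)
      nlinarith [hchain, hfin]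
    rw [hsplit]
    calc (∫ θ in (0:ℝ)..(π/2), Real.exp (x*(Real.cos θ - 1)) * Real.sin θ ^ ν)
          + (∫ θ in (π/2)..π, Real.exp (x*(Real.cos θ - 1)) * Real.sin θ ^ ν)
        ≤ M * 2^p * G * (1+x)^(-p) + (K * (1+x)^(-p)) * B := add_le_add hT1 hT2
      _ ≤ (2^p * B + M * 2^p * G + K * B + 1) * (1+x)^(-p) := by
          nlinarith [mul_nonneg (mul_nonneg h2p.le hB0) hpos_rpow.le, hpos_rpow.le]
end

section
/- For real μ > 1, the function H(r,s,t) = c_μ t^{-μ/2} e^{-(r²+s²)/(4t)} I(rs/(2t)), where I(x) = ∫₀^π e^{x cos θ} sin^{μ-2} θ dθ, satisfies the radial heat equation (∂_t - ∂_r² - ((μ-1)/r)∂_r) H(·,s,t) = 0 for all r, s, t > 0. -/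
open Real MeasureTheory intervalIntegral Set

lemma aesm_aux (g : ℝ → ℝ) (hg : Continuous g) (ν a b : ℝ)
    (h0 : 0 ≤ a) (hab : a ≤ b) (hb : b ≤ π) :
    AEStronglyMeasurable (fun θ => g θ * Real.sin θ ^ ν)
      (volume.restrict (Set.uIoc a b)) := by
  rw [Set.uIoc_of_le hab, ← Measure.restrict_congr_set Ioo_ae_eq_Ioc]
  refine (ContinuousOn.mul hg.continuousOn ?_).aestronglyMeasurable measurableSet_Ioo
  refine Real.continuous_sin.continuousOn.rpow_const fun x hx => Or.inl ?_
  exact ne_of_gt (Real.sin_pos_of_pos_of_lt_pi (h0.trans_lt hx.1) (hx.2.trans_le hb))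

lemma sin_rpow_int {ν : ℝ} (hν : -1 < ν) :
    IntervalIntegrable (fun θ => Real.sin θ ^ ν) volume 0 π := by
  rcases le_or_gt 0 ν with hν0 | hν0
  · exact (Real.continuous_sin.rpow_const fun x => Or.inr hν0).intervalIntegrable 0 π
  have half : IntervalIntegrable (fun θ => Real.sin θ ^ ν) volume 0 (π / 2) := by
    refine ((intervalIntegrable_rpow' hν (a := 0) (b := π / 2)).const_mul
      ((2 / π) ^ ν)).mono_fun
      (aesm_aux 1 continuous_const ν 0 (π / 2) le_rfl (by positivity) (by linarith [pi_pos])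
        |>.congr (by filter_upwards with θ; simp)) ?_
    have hpi := Real.pi_pos
    rw [Filter.EventuallyLE, ae_restrict_iff' measurableSet_uIoc]
    filter_upwards with θ hθ
    rw [Set.uIoc_of_le (by positivity)] at hθ
    have hθ0 : 0 < θ := hθ.1
    have hθ2 : θ ≤ π / 2 := hθ.2
    have hsin : 2 / π * θ ≤ Real.sin θ := Real.mul_le_sin hθ0.le hθ2
    have hpos : (0:ℝ) < 2 / π * θ := by positivity
    have key : Real.sin θ ^ ν ≤ (2 / π) ^ ν * θ ^ ν := by
      rw [← Real.mul_rpow (by positivity) hθ0.le]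
      exact Real.rpow_le_rpow_of_nonpos hpos hsin hν0.le
    have h1 : (0:ℝ) ≤ Real.sin θ ^ ν := Real.rpow_nonneg (Real.sin_nonneg_of_nonneg_of_le_pi hθ0.le (by linarith)) ν
    simp only [Real.norm_eq_abs, abs_of_nonneg h1]
    exact key.trans (le_abs_self _)
  have half2 : IntervalIntegrable (fun θ => Real.sin θ ^ ν) volume (π / 2) π := by
    have := half.comp_sub_left π
    simp only [Real.sin_pi_sub, sub_zero] at this
    have h2 : π - π / 2 = π / 2 := by ring
    rw [h2] at this
    exact this.symm
  exact half.trans half2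

lemma integrand_int {μ : ℝ} (hμ : 1 < μ) (g : ℝ → ℝ) (hg : Continuous g) :
    IntervalIntegrable (fun θ => g θ * Real.sin θ ^ (μ - 2)) volume 0 π := by
  obtain ⟨C, hC⟩ := (isCompact_Icc (a := (0:ℝ)) (b := π)).exists_bound_of_continuousOn
    hg.continuousOn
  refine ((sin_rpow_int (ν := μ - 2) (by linarith)).const_mul C).mono_fun
    (aesm_aux g hg _ 0 π le_rfl pi_pos.le le_rfl) ?_
  rw [Filter.EventuallyLE, ae_restrict_iff' measurableSet_uIoc]
  filter_upwards with θ hθ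
  rw [Set.uIoc_of_le pi_pos.le] at hθ
  have hs : (0:ℝ) ≤ Real.sin θ ^ (μ - 2) :=
    Real.rpow_nonneg (Real.sin_nonneg_of_nonneg_of_le_pi hθ.1.le hθ.2) _
  have hCθ : |g θ| ≤ C := by simpa using hC θ ⟨hθ.1.le, hθ.2⟩
  have hC0 : 0 ≤ C := le_trans (abs_nonneg _) hCθ
  simp only [Real.norm_eq_abs]
  rw [abs_mul, abs_mul, abs_of_nonneg hs]
  exact mul_le_mul_of_nonneg_right (hCθ.trans (le_abs_self C)) hs

noncomputable def J (μ : ℝ) (k : ℕ) (x : ℝ) : ℝ :=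
  ∫ θ in (0:ℝ)..π, (Real.cos θ ^ k * Real.exp (x * Real.cos θ)) * Real.sin θ ^ (μ - 2)

lemma hasDerivAt_J {μ : ℝ} (hμ : 1 < μ) (k : ℕ) (x₀ : ℝ) :
    HasDerivAt (J μ k) (J μ (k + 1) x₀) x₀ := by
  have key := intervalIntegral.hasDerivAt_integral_of_dominated_loc_of_deriv_le
    (μ := volume) (a := 0) (b := π) (x₀ := x₀) (s := Metric.ball x₀ 1)
    (F := fun x θ => (Real.cos θ ^ k * Real.exp (x * Real.cos θ)) * Real.sin θ ^ (μ - 2))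
    (F' := fun x θ => (Real.cos θ ^ (k + 1) * Real.exp (x * Real.cos θ)) * Real.sin θ ^ (μ - 2))
    (bound := fun θ => Real.exp (|x₀| + 1) * Real.sin θ ^ (μ - 2))
    (Metric.ball_mem_nhds x₀ one_pos) ?_ ?_ ?_ ?_ ?_ ?_
  · exact key.2
  · filter_upwards with x
    exact aesm_aux _ (by continuity) _ 0 π le_rfl pi_pos.le le_rfl
  · exact integrand_int hμ _ (by continuity)
  · exact aesm_aux _ (by continuity) _ 0 π le_rfl pi_pos.le le_rfl
  · filter_upwards with θ hθ x hx
    rw [Set.uIoc_of_le pi_pos.le] at hθ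
    have hsin : (0:ℝ) ≤ Real.sin θ ^ (μ - 2) :=
      Real.rpow_nonneg (Real.sin_nonneg_of_nonneg_of_le_pi hθ.1.le hθ.2) _
    have hx1 : |x| ≤ |x₀| + 1 := by
      have := mem_ball_iff_norm.mp hx
      rw [Real.norm_eq_abs] at this
      calc |x| = |x₀ + (x - x₀)| := by ring_nf
        _ ≤ |x₀| + |x - x₀| := abs_add_le _ _
        _ ≤ |x₀| + 1 := by linarith
    have hexp : Real.exp (x * Real.cos θ) ≤ Real.exp (|x₀| + 1) := by
      refine Real.exp_le_exp.mpr (le_trans ?_ hx1)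
      calc x * Real.cos θ ≤ |x * Real.cos θ| := le_abs_self _
        _ = |x| * |Real.cos θ| := abs_mul _ _
        _ ≤ |x| * 1 := mul_le_mul_of_nonneg_left (abs_cos_le_one θ) (abs_nonneg x)
        _ = |x| := mul_one _
    have hcos : |Real.cos θ ^ (k + 1)| ≤ 1 := by
      rw [abs_pow]; exact pow_le_one₀ (abs_nonneg _) (abs_cos_le_one θ)
    rw [Real.norm_eq_abs, abs_mul, abs_mul, abs_of_nonneg hsin,
      abs_of_nonneg (Real.exp_pos _).le]
    calc |Real.cos θ ^ (k+1)| * Real.exp (x * Real.cos θ) * Real.sin θ ^ (μ - 2)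
        ≤ 1 * Real.exp (|x₀| + 1) * Real.sin θ ^ (μ - 2) := by
          exact mul_le_mul_of_nonneg_right
            (mul_le_mul hcos hexp (Real.exp_pos _).le one_pos.le) hsin
      _ = Real.exp (|x₀| + 1) * Real.sin θ ^ (μ - 2) := by ring
  · exact (sin_rpow_int (by linarith)).const_mul _
  · filter_upwards with θ hθ x hx
    have h1 : HasDerivAt (fun x : ℝ => x * Real.cos θ) (Real.cos θ) x := by
      simpa using (hasDerivAt_id x).mul_const (Real.cos θ)
    have h2 := ((h1.exp.const_mul (Real.cos θ ^ k)).mul_const (Real.sin θ ^ (μ - 2)))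
    refine h2.congr_deriv ?_
    rw [pow_succ]
    ring

lemma bessel {μ : ℝ} (hμ : 1 < μ) (x : ℝ) :
    x * J μ 2 x + (μ - 1) * J μ 1 x - x * J μ 0 x = 0 := by
  have hint : ∀ k : ℕ, IntervalIntegrable
      (fun θ => (Real.cos θ ^ k * Real.exp (x * Real.cos θ)) * Real.sin θ ^ (μ - 2))
      volume 0 π := fun k => integrand_int hμ _ (by continuity)
  set f' : ℝ → ℝ := fun θ =>
    (Real.exp (x * Real.cos θ) * (-x * (1 - Real.cos θ ^ 2) + (μ - 1) * Real.cos θ))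
      * Real.sin θ ^ (μ - 2) with hf'
  have hftc : (∫ θ in (0:ℝ)..π, f' θ) =
      Real.exp (x * Real.cos π) * Real.sin π ^ (μ - 1)
        - Real.exp (x * Real.cos 0) * Real.sin 0 ^ (μ - 1) := by
    refine intervalIntegral.integral_eq_sub_of_hasDerivAt_of_le
      (f := fun θ => Real.exp (x * Real.cos θ) * Real.sin θ ^ (μ - 1)) pi_pos.le ?_ ?_ ?_
    · refine Continuous.continuousOn ?_
      exact ((continuous_const.mul Real.continuous_cos).rexp).mul
        (Real.continuous_sin.rpow_const fun _ => Or.inr (by linarith))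
    · intro θ hθ
      have hsin : 0 < Real.sin θ := Real.sin_pos_of_pos_of_lt_pi hθ.1 hθ.2
      have h1 : HasDerivAt (fun θ => Real.exp (x * Real.cos θ))
          (Real.exp (x * Real.cos θ) * (x * -Real.sin θ)) θ :=
        ((Real.hasDerivAt_cos θ).const_mul x).exp
      have h2 : HasDerivAt (fun θ => Real.sin θ ^ (μ - 1))
          ((μ - 1) * Real.sin θ ^ (μ - 1 - 1) * Real.cos θ) θ :=
        (Real.hasDerivAt_rpow_const (p := μ - 1) (Or.inl hsin.ne')).comp θ
          (Real.hasDerivAt_sin θ)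
      have h3 := h1.mul h2
      refine h3.congr_deriv ?_
      have e1 : μ - 1 - 1 = μ - 2 := by ring
      have e2 : Real.sin θ ^ (μ - 1) = Real.sin θ * Real.sin θ ^ (μ - 2) := by
        rw [show μ - 1 = 1 + (μ - 2) by ring, Real.rpow_add hsin, Real.rpow_one]
      rw [hf']
      simp only []
      rw [e1, e2, ← Real.sin_sq]
      ring
    · exact integrand_int hμ _ (by continuity)
  rw [Real.sin_pi, Real.sin_zero, Real.zero_rpow (by linarith : μ - 1 ≠ 0)] at hftc
  simp only [mul_zero, sub_zero] at hftc
  have hsplit : (∫ θ in (0:ℝ)..π, f' θ)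
      = x * J μ 2 x + (μ - 1) * J μ 1 x - x * J μ 0 x := by
    unfold J
    rw [← intervalIntegral.integral_const_mul, ← intervalIntegral.integral_const_mul,
      ← intervalIntegral.integral_const_mul,
      ← intervalIntegral.integral_add ((hint 2).const_mul x) ((hint 1).const_mul _),
      ← intervalIntegral.integral_sub (((hint 2).const_mul x).add ((hint 1).const_mul _))
        ((hint 0).const_mul x)]
    apply intervalIntegral.integral_congr
    intro θ _
    simp only [hf', pow_zero]
    ring
  rw [hsplit] at hftc
  linarith [hftc]


/-- for μ > 1, H(r,s,t) = c_μ t^{-μ/2} e^{-(r²+s²)/(4t)} I(rs/(2t)),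
with I(x) = ∫₀^π e^{x cos θ} sin^{μ-2} θ dθ, satisfies the radial heat equation
(∂_t - ∂_r² - ((μ-1)/r)∂_r) H(·,s,t) = 0 for all r,s,t > 0. -/
theorem stmt4 (μ c : ℝ) (hμ : 1 < μ) (hc : 0 < c)
    (I : ℝ → ℝ)
    (hI : I = fun x => ∫ θ in (0:ℝ)..π, Real.exp (x * Real.cos θ) * Real.sin θ ^ (μ - 2))
    (H : ℝ → ℝ → ℝ → ℝ)
    (hH : H = fun r s t => c * t ^ (-(μ / 2)) * Real.exp (-(r ^ 2 + s ^ 2) / (4 * t))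
      * I (r * s / (2 * t)))
    (r s t : ℝ) (hr : 0 < r) (hs : 0 < s) (ht : 0 < t) :
    deriv (fun t' => H r s t') t
      - deriv (deriv fun x => H x s t) r
      - ((μ - 1) / r) * deriv (fun x => H x s t) r = 0 := by
  have hI0 : I = J μ 0 := by
    funext x
    rw [hI]
    unfold J
    simp
  simp only [hH, hI0]
  have ht' : t ≠ 0 := ht.ne'
  have hr' : r ≠ 0 := hr.ne'
  have hs' : s ≠ 0 := hs.ne'
  -- first derivative in r, at every point
  have hHr : ∀ ρ : ℝ, HasDerivAt
      (fun x => c * t ^ (-(μ / 2)) * Real.exp (-(x ^ 2 + s ^ 2) / (4 * t))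
        * J μ 0 (x * s / (2 * t)))
      (c * t ^ (-(μ / 2)) * Real.exp (-(ρ ^ 2 + s ^ 2) / (4 * t)) *
        (-(ρ / (2 * t)) * J μ 0 (ρ * s / (2 * t))
          + s / (2 * t) * J μ 1 (ρ * s / (2 * t)))) ρ := by
    intro ρ
    have hXd : HasDerivAt (fun x : ℝ => x * s / (2 * t)) (s / (2 * t)) ρ := by
      simpa using ((hasDerivAt_id ρ).mul_const s).div_const (2 * t)
    have hEd : HasDerivAt (fun x : ℝ => Real.exp (-(x ^ 2 + s ^ 2) / (4 * t)))
        (Real.exp (-(ρ ^ 2 + s ^ 2) / (4 * t)) * (-(2 * ρ) / (4 * t))) ρ := by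
      have h1 : HasDerivAt (fun x : ℝ => -(x ^ 2 + s ^ 2) / (4 * t)) (-(2 * ρ) / (4 * t)) ρ := by
        have h2 : HasDerivAt (fun x : ℝ => -(x ^ 2 + s ^ 2)) (-(2 * ρ)) ρ := by
          have := ((hasDerivAt_pow 2 ρ).add_const (s ^ 2)).neg
          refine this.congr_deriv ?_
          norm_num
        exact h2.div_const (4 * t)
      exact h1.exp
    have hId : HasDerivAt (fun x : ℝ => J μ 0 (x * s / (2 * t)))
        (J μ 1 (ρ * s / (2 * t)) * (s / (2 * t))) ρ := (hasDerivAt_J hμ 0 _).comp ρ hXd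
    have h := (hEd.const_mul (c * t ^ (-(μ / 2)))).mul hId
    refine h.congr_deriv ?_
    field_simp
    ring
  -- second derivative in r
  have hG : HasDerivAt
      (fun ρ => c * t ^ (-(μ / 2)) * Real.exp (-(ρ ^ 2 + s ^ 2) / (4 * t)) *
        (-(ρ / (2 * t)) * J μ 0 (ρ * s / (2 * t))
          + s / (2 * t) * J μ 1 (ρ * s / (2 * t))))
      (c * t ^ (-(μ / 2)) * Real.exp (-(r ^ 2 + s ^ 2) / (4 * t)) *
        ((r ^ 2 / (4 * t ^ 2) - 1 / (2 * t)) * J μ 0 (r * s / (2 * t))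
          - r * s / (2 * t ^ 2) * J μ 1 (r * s / (2 * t))
          + s ^ 2 / (4 * t ^ 2) * J μ 2 (r * s / (2 * t)))) r := by
    have hXd : HasDerivAt (fun x : ℝ => x * s / (2 * t)) (s / (2 * t)) r := by
      simpa using ((hasDerivAt_id r).mul_const s).div_const (2 * t)
    have hEd : HasDerivAt (fun x : ℝ => Real.exp (-(x ^ 2 + s ^ 2) / (4 * t)))
        (Real.exp (-(r ^ 2 + s ^ 2) / (4 * t)) * (-(2 * r) / (4 * t))) r := by
      have h1 : HasDerivAt (fun x : ℝ => -(x ^ 2 + s ^ 2) / (4 * t)) (-(2 * r) / (4 * t)) r := by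
        have h2 : HasDerivAt (fun x : ℝ => -(x ^ 2 + s ^ 2)) (-(2 * r)) r := by
          have := ((hasDerivAt_pow 2 r).add_const (s ^ 2)).neg
          refine this.congr_deriv ?_
          norm_num
        exact h2.div_const (4 * t)
      exact h1.exp
    have hm1 : HasDerivAt (fun ρ : ℝ => -(ρ / (2 * t))) (-(1 / (2 * t))) r := by
      exact ((hasDerivAt_id r).div_const (2 * t)).neg
    have h0 := (hasDerivAt_J hμ 0 _).comp r hXd
    have h1 := (hasDerivAt_J hμ 1 _).comp r hXd
    have hB := (hm1.mul h0).add (h1.const_mul (s / (2 * t)))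
    have h := (hEd.const_mul (c * t ^ (-(μ / 2)))).mul hB
    refine h.congr_deriv ?_
    simp only [Function.comp_apply, Pi.mul_apply, Pi.add_apply]
    field_simp
    ring
  -- derivative in t
  have hHt : HasDerivAt
      (fun t' => c * t' ^ (-(μ / 2)) * Real.exp (-(r ^ 2 + s ^ 2) / (4 * t'))
        * J μ 0 (r * s / (2 * t')))
      (c * t ^ (-(μ / 2)) * Real.exp (-(r ^ 2 + s ^ 2) / (4 * t)) *
        ((-(μ / 2) / t + (r ^ 2 + s ^ 2) / (4 * t ^ 2)) * J μ 0 (r * s / (2 * t))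
          - r * s / (2 * t ^ 2) * J μ 1 (r * s / (2 * t)))) t := by
    have hTd : HasDerivAt (fun t' : ℝ => t' ^ (-(μ / 2))) (-(μ / 2) * t ^ (-(μ / 2) - 1)) t :=
      Real.hasDerivAt_rpow_const (Or.inl ht.ne')
    have h4t : HasDerivAt (fun t' : ℝ => 4 * t') 4 t := by
      simpa using (hasDerivAt_id t).const_mul (4:ℝ)
    have hud : HasDerivAt (fun t' : ℝ => -(r ^ 2 + s ^ 2) / (4 * t'))
        (-(r ^ 2 + s ^ 2) * (-4 / (4 * t) ^ 2)) t := by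
      have := (h4t.inv (by positivity)).const_mul (-(r ^ 2 + s ^ 2))
      simpa [div_eq_mul_inv] using this
    have h2t : HasDerivAt (fun t' : ℝ => 2 * t') 2 t := by
      simpa using (hasDerivAt_id t).const_mul (2:ℝ)
    have hXd : HasDerivAt (fun t' : ℝ => r * s / (2 * t')) (r * s * (-2 / (2 * t) ^ 2)) t := by
      have := (h2t.inv (by positivity)).const_mul (r * s)
      simpa [div_eq_mul_inv] using this
    have hJX := (hasDerivAt_J hμ 0 _).comp t hXd
    have h := ((hTd.const_mul c).mul hud.exp).mul hJX
    refine h.congr_deriv ?_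
    simp only [Function.comp_apply, Pi.mul_apply, Pi.add_apply]
    rw [show -(μ / 2) - 1 = -(μ / 2) + -1 by ring, Real.rpow_add ht, Real.rpow_neg_one]
    field_simp
    ring
  have hdf : (deriv fun x => c * t ^ (-(μ / 2)) * Real.exp (-(x ^ 2 + s ^ 2) / (4 * t))
        * J μ 0 (x * s / (2 * t)))
      = fun ρ => c * t ^ (-(μ / 2)) * Real.exp (-(ρ ^ 2 + s ^ 2) / (4 * t)) *
        (-(ρ / (2 * t)) * J μ 0 (ρ * s / (2 * t))
          + s / (2 * t) * J μ 1 (ρ * s / (2 * t))) :=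
    funext fun ρ => (hHr ρ).deriv
  rw [hHt.deriv]
  simp only [hdf]
  rw [hG.deriv]
  have hb := bessel hμ (r * s / (2 * t))
  have hb' : J μ 2 (r * s / (2 * t)) =
      J μ 0 (r * s / (2 * t)) - (μ - 1) * J μ 1 (r * s / (2 * t)) * (2 * t) / (r * s) := by
    field_simp at hb ⊢
    linear_combination hb
  rw [hb']
  field_simp
  ring
end

section
/- For real μ > 1 there is a constant C_μ such that for all r, s, t > 0, the function H(r,s,t) = c_μ t^{-μ/2} e^{-(r²+s²)/(4t)} I(rs/(2t)) satisfies H(r,s,t) ≤ C_μ e^{-(r-s)²/(4t)} t^{-1/2} (rs + t)^{-(μ-1)/2}. -/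
set_option maxHeartbeats 1000000

open Real MeasureTheory Set


lemma sin_rpow_le (μ θ : ℝ) (hμ : 1 < μ) (h0 : 0 < θ) (h2 : θ ≤ π/2) :
    Real.sin θ ^ (μ-2) ≤ (π/2) * θ^(μ-2) := by
  have hπ := pi_pos
  have hθπ : θ < π := lt_of_le_of_lt h2 (by linarith)
  have hs : 0 < Real.sin θ := Real.sin_pos_of_pos_of_lt_pi h0 hθπ
  have h1 : Real.sin θ ^ (μ-1) ≤ θ ^ (μ-1) :=
    Real.rpow_le_rpow hs.le (Real.sin_le h0.le) (by linarith)
  have h2' : (2/π) * θ ≤ Real.sin θ := Real.mul_le_sin h0.le h2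
  have e1 : Real.sin θ ^ (μ-2) = Real.sin θ ^ (μ-1) / Real.sin θ := by
    rw [show μ - 2 = (μ-1) - 1 by ring, Real.rpow_sub_one hs.ne']
  have e2 : θ ^ (μ-1) = θ ^ (μ-2) * θ := by
    rw [← Real.rpow_add_one h0.ne']; ring_nf
  have hpos : 0 < (2/π) * θ := by positivity
  calc Real.sin θ ^ (μ-2) = Real.sin θ ^ (μ-1) / Real.sin θ := e1
    _ ≤ θ ^ (μ-1) / ((2/π) * θ) := by
        exact div_le_div₀ (Real.rpow_nonneg h0.le _) h1 hpos h2'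
    _ = (π/2) * θ^(μ-2) := by
        rw [e2]; field_simp

lemma cos_le_aux (θ : ℝ) (h0 : 0 ≤ θ) (h1 : θ ≤ π) : Real.cos θ ≤ 1 - 2*θ^2/π^2 := by
  have hπ := pi_pos
  have hj : (2/π) * (θ/2) ≤ Real.sin (θ/2) := Real.mul_le_sin (by linarith) (by linarith)
  have hsq : (θ/π)^2 ≤ Real.sin (θ/2)^2 := by
    have : (2/π) * (θ/2) = θ/π := by field_simp
    rw [← this]
    have h' : 0 ≤ (2/π) * (θ/2) := by positivity
    exact pow_le_pow_left₀ h' hj 2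
  have hd : Real.sin (θ/2)^2 = 1/2 - Real.cos θ / 2 := by
    have := Real.sin_sq_eq_half_sub (θ/2)
    rw [this]; ring_nf
  have hππ : π ≠ 0 := hπ.ne'
  rw [hd] at hsq
  have : (θ/π)^2 = θ^2/π^2 := by ring
  rw [this] at hsq
  have h2 : 2*θ^2/π^2 = 2*(θ^2/π^2) := by ring
  linarith

lemma key (μ : ℝ) (hμ : 1 < μ) : ∃ C > 0, ∀ x : ℝ, 0 ≤ x →
    (∫ θ in (0:ℝ)..π, Real.exp (x * Real.cos θ) * Real.sin θ ^ (μ - 2))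
      ≤ C * Real.exp x * (1 + 2 * x) ^ (-(μ - 1) / 2) := by
  have hπ := pi_pos
  set p : ℝ := (μ - 1) / 2 with hp
  have hp0 : 0 < p := by rw [hp]; linarith
  have hm2 : (-1:ℝ) < μ - 2 := by linarith
  set J : ℝ := ∫ θ in Ioo (0:ℝ) π, θ ^ (μ-2) with hJ
  set J' : ℝ := ∫ θ in Ioo (0:ℝ) π, (π - θ) ^ (μ-2) with hJ'
  set G : ℝ := ∫ u in Ioi (0:ℝ), u ^ (μ-2) * Real.exp (-(2/π^2) * u^2) with hG
  set n : ℕ := ⌈p⌉₊ with hn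
  -- integrabilities
  have int1 : IntegrableOn (fun θ : ℝ => θ ^ (μ-2)) (Ioo 0 π) :=
    (intervalIntegral.integrableOn_Ioo_rpow_iff hπ).2 hm2
  have int2 : IntegrableOn (fun θ : ℝ => (π - θ) ^ (μ-2)) (Ioo 0 π) := by
    have h := (intervalIntegral.intervalIntegrable_rpow' hm2 (a := 0) (b := π)).comp_sub_left π
    simp only [sub_zero, sub_self] at h
    have h2 := h.symm.1
    simpa using h2.mono_set Ioo_subset_Ioc_self
  have hJ0 : 0 ≤ J := setIntegral_nonneg measurableSet_Ioo
    fun θ hθ => Real.rpow_nonneg hθ.1.le _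
  have hJ'0 : 0 ≤ J' := setIntegral_nonneg measurableSet_Ioo
    fun θ hθ => Real.rpow_nonneg (by linarith [hθ.2]) _
  have hG0 : 0 ≤ G := setIntegral_nonneg measurableSet_Ioi
    fun u hu => mul_nonneg (Real.rpow_nonneg (le_of_lt hu) _) (Real.exp_nonneg _)
  set C : ℝ := 3^p * (π/2) * (J + J' + G + (Nat.factorial n : ℝ) * J') + 1 with hC
  have hnJ0 : 0 ≤ (Nat.factorial n : ℝ) * J' := mul_nonneg (by positivity) hJ'0
  have hC0 : 0 < C := by
    have h1 : (0:ℝ) ≤ 3^p * (π/2) * (J + J' + G + (Nat.factorial n : ℝ) * J') := by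
      apply mul_nonneg (by positivity); linarith
    rw [hC]; linarith
  have h3p : (3:ℝ)^p * (3:ℝ)^(-p) = 1 := by
    rw [← Real.rpow_add (by norm_num)]; simp
  have h3pneg : (0:ℝ) < (3:ℝ)^(-p) := Real.rpow_pos_of_pos (by norm_num) _
  have hCe : C * (3:ℝ)^(-p)
      = (π/2) * (J + J' + G + (Nat.factorial n : ℝ) * J') * ((3:ℝ)^p * (3:ℝ)^(-p)) + (3:ℝ)^(-p) := by
    rw [hC]; ring
  rw [h3p, mul_one] at hCe
  refine ⟨C, hC0, fun x hx => ?_⟩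
  -- rewrite as integral over Ioo
  rw [intervalIntegral.integral_of_le hπ.le, integral_Ioc_eq_integral_Ioo]
  have hf0 : 0 ≤ᵐ[volume.restrict (Ioo 0 π)]
      fun θ => Real.exp (x * Real.cos θ) * Real.sin θ ^ (μ - 2) :=
    (ae_restrict_mem measurableSet_Ioo).mono fun θ hθ =>
      mul_nonneg (Real.exp_nonneg _)
        (Real.rpow_nonneg (Real.sin_nonneg_of_nonneg_of_le_pi hθ.1.le hθ.2.le) _)
  rcases le_or_gt x 1 with hx1 | hx1
  · -- small x
    have hB : ∀ θ ∈ Ioo (0:ℝ) π, Real.exp (x * Real.cos θ) * Real.sin θ ^ (μ - 2)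
        ≤ Real.exp x * ((π/2) * θ^(μ-2) + (π/2) * (π-θ)^(μ-2)) := by
      intro θ hθ
      have he : Real.exp (x * Real.cos θ) ≤ Real.exp x := by
        apply Real.exp_le_exp.2
        nlinarith [Real.cos_le_one θ, Real.neg_one_le_cos θ]
      have hsnn : 0 ≤ Real.sin θ ^ (μ-2) :=
        Real.rpow_nonneg (Real.sin_nonneg_of_nonneg_of_le_pi hθ.1.le hθ.2.le) _
      rcases le_or_gt θ (π/2) with h | h
      · have hs := sin_rpow_le μ θ hμ hθ.1 h
        have hnn2 : 0 ≤ (π/2) * (π-θ)^(μ-2) :=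
          mul_nonneg (by positivity) (Real.rpow_nonneg (by linarith [hθ.2]) _)
        calc Real.exp (x * Real.cos θ) * Real.sin θ ^ (μ - 2)
            ≤ Real.exp x * ((π/2) * θ^(μ-2)) :=
              mul_le_mul he hs hsnn (Real.exp_nonneg _)
          _ ≤ Real.exp x * ((π/2) * θ^(μ-2) + (π/2) * (π-θ)^(μ-2)) := by
              have := Real.exp_nonneg x; nlinarith
      · have hs : Real.sin θ ^ (μ-2) ≤ (π/2) * (π-θ)^(μ-2) := by
          rw [← Real.sin_pi_sub]
          exact sin_rpow_le μ (π-θ) hμ (by linarith [hθ.2]) (by linarith)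
        have hnn1 : 0 ≤ (π/2) * θ^(μ-2) :=
          mul_nonneg (by positivity) (Real.rpow_nonneg hθ.1.le _)
        calc Real.exp (x * Real.cos θ) * Real.sin θ ^ (μ - 2)
            ≤ Real.exp x * ((π/2) * (π-θ)^(μ-2)) :=
              mul_le_mul he hs hsnn (Real.exp_nonneg _)
          _ ≤ Real.exp x * ((π/2) * θ^(μ-2) + (π/2) * (π-θ)^(μ-2)) := by
              have := Real.exp_nonneg x; nlinarith
    have hint : IntegrableOn
        (fun θ : ℝ => Real.exp x * ((π/2) * θ^(μ-2) + (π/2) * (π-θ)^(μ-2))) (Ioo 0 π) :=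
      ((int1.const_mul (π/2)).add (int2.const_mul (π/2))).const_mul _
    have hmono := integral_mono_of_nonneg hf0 hint
      ((ae_restrict_mem measurableSet_Ioo).mono hB)
    have hval : (∫ θ in Ioo (0:ℝ) π, Real.exp x * ((π/2) * θ^(μ-2) + (π/2) * (π-θ)^(μ-2)))
        = Real.exp x * ((π/2) * J + (π/2) * J') := by
      rw [integral_const_mul, integral_add (int1.const_mul (π/2)) (int2.const_mul (π/2)),
        integral_const_mul, integral_const_mul]
    rw [hval] at hmono
    have h3 : (3:ℝ)^(-p) ≤ (1 + 2*x)^(-p) :=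
      Real.rpow_le_rpow_of_nonpos (by linarith) (by linarith) (by linarith)
    have hcoef : (π/2) * J + (π/2) * J' ≤ C * (3:ℝ)^(-p) := by
      rw [hCe]; nlinarith
    calc (∫ θ in Ioo (0:ℝ) π, Real.exp (x * Real.cos θ) * Real.sin θ ^ (μ - 2))
        ≤ Real.exp x * ((π/2) * J + (π/2) * J') := hmono
      _ ≤ Real.exp x * (C * (3:ℝ)^(-p)) :=
          mul_le_mul_of_nonneg_left hcoef (Real.exp_nonneg _)
      _ ≤ Real.exp x * (C * (1 + 2*x)^(-p)) := by
          apply mul_le_mul_of_nonneg_left _ (Real.exp_nonneg _)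
          exact mul_le_mul_of_nonneg_left h3 hC0.le
      _ = C * Real.exp x * (1 + 2*x) ^ (-(μ-1)/2) := by
          rw [show -(μ-1)/2 = -p by rw [hp]; ring]; ring
  · -- large x
    have hx0 : 0 < x := by linarith
    have hb : 0 < 2*x/π^2 := by positivity
    set K : ℝ := ∫ θ in Ioo (0:ℝ) π, θ^(μ-2) * Real.exp (-(2*x/π^2) * θ^2) with hK
    have intK : IntegrableOn (fun θ : ℝ => θ^(μ-2) * Real.exp (-(2*x/π^2) * θ^2)) (Ioi 0) :=
      integrableOn_rpow_mul_exp_neg_mul_sq hb hm2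
    have intK' : IntegrableOn (fun θ : ℝ => θ^(μ-2) * Real.exp (-(2*x/π^2) * θ^2)) (Ioo 0 π) :=
      intK.mono_set fun θ hθ => hθ.1
    -- pointwise bound
    have hB : ∀ θ ∈ Ioo (0:ℝ) π, Real.exp (x * Real.cos θ) * Real.sin θ ^ (μ - 2)
        ≤ Real.exp x * (π/2) * (θ^(μ-2) * Real.exp (-(2*x/π^2) * θ^2))
          + (π/2) * (π-θ)^(μ-2) := by
      intro θ hθ
      have hsnn : 0 ≤ Real.sin θ ^ (μ-2) :=
        Real.rpow_nonneg (Real.sin_nonneg_of_nonneg_of_le_pi hθ.1.le hθ.2.le) _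
      rcases le_or_gt θ (π/2) with h | h
      · have hcos : x * Real.cos θ ≤ x + (-(2*x/π^2) * θ^2) := by
          have h1 := cos_le_aux θ hθ.1.le hθ.2.le
          have h2 : x * Real.cos θ ≤ x * (1 - 2*θ^2/π^2) :=
            mul_le_mul_of_nonneg_left h1 hx
          have h3 : x * (1 - 2*θ^2/π^2) = x + (-(2*x/π^2) * θ^2) := by
            field_simp; ring
          linarith
        have he : Real.exp (x * Real.cos θ)
            ≤ Real.exp x * Real.exp (-(2*x/π^2) * θ^2) := by
          rw [← Real.exp_add]; exact Real.exp_le_exp.2 hcos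
        have hs := sin_rpow_le μ θ hμ hθ.1 h
        have hnn2 : 0 ≤ (π/2) * (π-θ)^(μ-2) :=
          mul_nonneg (by positivity) (Real.rpow_nonneg (by linarith [hθ.2]) _)
        have step : Real.exp (x * Real.cos θ) * Real.sin θ ^ (μ - 2)
            ≤ (Real.exp x * Real.exp (-(2*x/π^2) * θ^2)) * ((π/2) * θ^(μ-2)) :=
          mul_le_mul he hs hsnn (by positivity)
        calc Real.exp (x * Real.cos θ) * Real.sin θ ^ (μ - 2)
            ≤ (Real.exp x * Real.exp (-(2*x/π^2) * θ^2)) * ((π/2) * θ^(μ-2)) := step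
          _ = Real.exp x * (π/2) * (θ^(μ-2) * Real.exp (-(2*x/π^2) * θ^2)) := by ring
          _ ≤ _ := by linarith
      · have hcos : Real.cos θ ≤ 0 :=
          Real.cos_nonpos_of_pi_div_two_le_of_le h.le (by linarith [hθ.2])
        have he : Real.exp (x * Real.cos θ) ≤ 1 := by
          rw [show (1:ℝ) = Real.exp 0 by simp]
          exact Real.exp_le_exp.2 (mul_nonpos_of_nonneg_of_nonpos hx hcos)
        have hs : Real.sin θ ^ (μ-2) ≤ (π/2) * (π-θ)^(μ-2) := by
          rw [← Real.sin_pi_sub]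
          exact sin_rpow_le μ (π-θ) hμ (by linarith [hθ.2]) (by linarith)
        have hnn1 : 0 ≤ Real.exp x * (π/2) * (θ^(μ-2) * Real.exp (-(2*x/π^2) * θ^2)) := by
          apply mul_nonneg (by positivity)
          exact mul_nonneg (Real.rpow_nonneg hθ.1.le _) (Real.exp_nonneg _)
        have step : Real.exp (x * Real.cos θ) * Real.sin θ ^ (μ - 2)
            ≤ 1 * ((π/2) * (π-θ)^(μ-2)) := mul_le_mul he hs hsnn (by norm_num)
        rw [one_mul] at step
        linarith
    have hint : IntegrableOn
        (fun θ : ℝ => Real.exp x * (π/2) * (θ^(μ-2) * Real.exp (-(2*x/π^2) * θ^2))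
          + (π/2) * (π-θ)^(μ-2)) (Ioo 0 π) :=
      (intK'.const_mul _).add (int2.const_mul _)
    have hmono := integral_mono_of_nonneg hf0 hint
      ((ae_restrict_mem measurableSet_Ioo).mono hB)
    have hval : (∫ θ in Ioo (0:ℝ) π,
          (Real.exp x * (π/2) * (θ^(μ-2) * Real.exp (-(2*x/π^2) * θ^2))
            + (π/2) * (π-θ)^(μ-2)))
        = Real.exp x * (π/2) * K + (π/2) * J' := by
      rw [integral_add (intK'.const_mul _) (int2.const_mul _),
        integral_const_mul, integral_const_mul]
    rw [hval] at hmono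
    -- scaling bound for K
    have hKbound : K ≤ x ^ (-p) * G := by
      have hKle : K ≤ ∫ θ in Ioi (0:ℝ), θ^(μ-2) * Real.exp (-(2*x/π^2) * θ^2) := by
        apply setIntegral_mono_set intK
        · exact (ae_restrict_mem measurableSet_Ioi).mono fun u hu =>
            mul_nonneg (Real.rpow_nonneg (le_of_lt hu) _) (Real.exp_nonneg _)
        · exact HasSubset.Subset.eventuallyLE fun θ hθ => hθ.1
      have hscale : (∫ θ in Ioi (0:ℝ), θ^(μ-2) * Real.exp (-(2*x/π^2) * θ^2))
          = x ^ (-p) * G := by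
        set q : ℝ := x ^ ((1:ℝ)/2) with hq
        have hq0 : 0 < q := Real.rpow_pos_of_pos hx0 _
        have hqq : q^2 = x := by
          rw [hq, ← Real.rpow_natCast (x ^ ((1:ℝ)/2)) 2, ← Real.rpow_mul hx0.le]
          norm_num
        have step1 : ∀ θ ∈ Ioi (0:ℝ), θ^(μ-2) * Real.exp (-(2*x/π^2) * θ^2)
            = q^(-(μ-2)) * ((q*θ)^(μ-2) * Real.exp (-(2/π^2) * (q*θ)^2)) := by
          intro θ hθ
          have hθ0 : (0:ℝ) < θ := hθ
          have hexp : -(2/π^2) * (q*θ)^2 = -(2*x/π^2) * θ^2 := by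
            rw [mul_pow, hqq]; ring
          rw [hexp, Real.mul_rpow hq0.le hθ0.le]
          rw [show q^(-(μ-2)) * (q^(μ-2) * θ^(μ-2) * Real.exp (-(2*x/π^2) * θ^2))
            = (q^(-(μ-2)) * q^(μ-2)) * (θ^(μ-2) * Real.exp (-(2*x/π^2) * θ^2)) by ring]
          rw [← Real.rpow_add hq0, neg_add_cancel, Real.rpow_zero, one_mul]
        rw [setIntegral_congr_fun measurableSet_Ioi step1, integral_const_mul]
        have hcomp := integral_comp_mul_left_Ioi
          (fun u : ℝ => u^(μ-2) * Real.exp (-(2/π^2) * u^2)) 0 hq0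
        rw [mul_zero] at hcomp
        rw [hcomp, smul_eq_mul, ← hG]
        rw [show q^(-(μ-2)) * (q⁻¹ * G) = (q^(-(μ-2)) * q⁻¹) * G by ring]
        congr 1
        rw [← Real.rpow_neg_one q, ← Real.rpow_add hq0, hq,
          ← Real.rpow_mul hx0.le]
        congr 1
        rw [hp]; ring
      linarith [hKle, hscale.le, hscale.ge]
    -- final comparison
    have hxp : 0 < x ^ (-p) := Real.rpow_pos_of_pos hx0 _
    have hfac : 1 ≤ (Nat.factorial n : ℝ) * x^(-p) * Real.exp x := by
      have h1 : x^p ≤ x^((n:ℕ):ℝ) :=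
        Real.rpow_le_rpow_of_exponent_le hx1.le (Nat.le_ceil p)
      have h2 : x^((n:ℕ):ℝ) = x^(n:ℕ) := Real.rpow_natCast x n
      have h3 : x^(n:ℕ) ≤ (Nat.factorial n : ℝ) * Real.exp x := by
        have := Real.pow_div_factorial_le_exp x hx0.le n
        have hn0 : (0:ℝ) < (Nat.factorial n : ℝ) := by positivity
        rw [div_le_iff₀ hn0] at this
        linarith [this]
      have h4 : x^p ≤ (Nat.factorial n : ℝ) * Real.exp x := by rw [h2] at h1; linarith
      have h5 : x^p * x^(-p) = 1 := by
        rw [← Real.rpow_add hx0, add_neg_cancel, Real.rpow_zero]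
      calc (1:ℝ) = x^p * x^(-p) := h5.symm
        _ ≤ ((Nat.factorial n : ℝ) * Real.exp x) * x^(-p) :=
            mul_le_mul_of_nonneg_right h4 hxp.le
        _ = (Nat.factorial n : ℝ) * x^(-p) * Real.exp x := by ring
    have h3x : (3*x:ℝ)^(-p) ≤ (1 + 2*x)^(-p) :=
      Real.rpow_le_rpow_of_nonpos (by linarith) (by linarith) (by linarith)
    have h3x' : (3*x:ℝ)^(-p) = (3:ℝ)^(-p) * x^(-p) :=
      Real.mul_rpow (by norm_num) hx0.le
    have hstep : Real.exp x * (π/2) * K + (π/2) * J'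
        ≤ C * Real.exp x * ((3:ℝ)^(-p) * x^(-p)) := by
      have t1 : Real.exp x * (π/2) * K ≤ Real.exp x * (π/2) * (x^(-p) * G) :=
        mul_le_mul_of_nonneg_left hKbound (by positivity)
      have t2 : (π/2) * J' ≤ (π/2) * J' * ((Nat.factorial n : ℝ) * x^(-p) * Real.exp x) :=
        le_mul_of_one_le_right (mul_nonneg (by positivity) hJ'0) hfac
      have t3 : Real.exp x * (π/2) * (x^(-p) * G)
            + (π/2) * J' * ((Nat.factorial n : ℝ) * x^(-p) * Real.exp x)
          = Real.exp x * x^(-p) * ((π/2) * G + (π/2) * ((Nat.factorial n : ℝ) * J')) := by ring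
      have t4 : (π/2) * G + (π/2) * ((Nat.factorial n : ℝ) * J') ≤ C * (3:ℝ)^(-p) := by
        rw [hCe]; nlinarith
      have t5 : Real.exp x * x^(-p) * ((π/2) * G + (π/2) * ((Nat.factorial n : ℝ) * J'))
          ≤ Real.exp x * x^(-p) * (C * (3:ℝ)^(-p)) :=
        mul_le_mul_of_nonneg_left t4 (by positivity)
      calc Real.exp x * (π/2) * K + (π/2) * J'
          ≤ Real.exp x * (π/2) * (x^(-p) * G)
            + (π/2) * J' * ((Nat.factorial n : ℝ) * x^(-p) * Real.exp x) := by linarith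
        _ = Real.exp x * x^(-p) * ((π/2) * G + (π/2) * ((Nat.factorial n : ℝ) * J')) := t3
        _ ≤ Real.exp x * x^(-p) * (C * (3:ℝ)^(-p)) := t5
        _ = C * Real.exp x * ((3:ℝ)^(-p) * x^(-p)) := by ring
    calc (∫ θ in Ioo (0:ℝ) π, Real.exp (x * Real.cos θ) * Real.sin θ ^ (μ - 2))
        ≤ Real.exp x * (π/2) * K + (π/2) * J' := hmono
      _ ≤ C * Real.exp x * ((3:ℝ)^(-p) * x^(-p)) := hstep
      _ = C * Real.exp x * (3*x)^(-p) := by rw [h3x']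
      _ ≤ C * Real.exp x * (1 + 2*x)^(-p) :=
          mul_le_mul_of_nonneg_left h3x (by positivity)
      _ = C * Real.exp x * (1 + 2*x) ^ (-(μ-1)/2) := by
          rw [show -(μ-1)/2 = -p by rw [hp]; ring]

/-- for μ > 1 there is C_μ with
H(r,s,t) ≤ C_μ e^{-(r-s)²/(4t)} t^{-1/2} (rs+t)^{-(μ-1)/2} for all r,s,t > 0,
where H(r,s,t) = c_μ t^{-μ/2} e^{-(r²+s²)/(4t)} I(rs/(2t)). -/
theorem stmt5 (μ c : ℝ) (hμ : 1 < μ) (hc : 0 < c)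
    (I : ℝ → ℝ)
    (hI : I = fun x => ∫ θ in (0:ℝ)..π, Real.exp (x * Real.cos θ) * Real.sin θ ^ (μ - 2))
    (H : ℝ → ℝ → ℝ → ℝ)
    (hH : H = fun r s t => c * t ^ (-(μ / 2)) * Real.exp (-(r ^ 2 + s ^ 2) / (4 * t))
      * I (r * s / (2 * t))) :
    ∃ C > 0, ∀ r s t : ℝ, 0 < r → 0 < s → 0 < t →
      H r s t ≤ C * Real.exp (-(r - s) ^ 2 / (4 * t)) * t ^ (-(1 / 2) : ℝ)
        * (r * s + t) ^ (-(μ - 1) / 2) := by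
  obtain ⟨C, hC0, hbound⟩ := key μ hμ
  refine ⟨c * C, by positivity, fun r s t hr hs ht => ?_⟩
  set x : ℝ := r * s / (2 * t) with hx
  have hx0 : 0 ≤ x := by positivity
  have h2x : 0 < 1 + 2 * x := by linarith
  have hIb : I x ≤ C * Real.exp x * (1 + 2 * x) ^ (-(μ - 1) / 2) := by
    rw [hI]; exact hbound x hx0
  have hk : 0 ≤ c * t ^ (-(μ / 2)) * Real.exp (-(r ^ 2 + s ^ 2) / (4 * t)) := by positivity
  have hmain : H r s t ≤ c * t ^ (-(μ / 2)) * Real.exp (-(r ^ 2 + s ^ 2) / (4 * t))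
      * (C * Real.exp x * (1 + 2 * x) ^ (-(μ - 1) / 2)) := by
    rw [hH]
    exact mul_le_mul_of_nonneg_left hIb hk
  have E1 : Real.exp (-(r ^ 2 + s ^ 2) / (4 * t)) * Real.exp x
      = Real.exp (-(r - s) ^ 2 / (4 * t)) := by
    rw [← Real.exp_add]
    congr 1
    rw [hx]; field_simp; ring
  have E2 : t ^ (-(μ / 2)) = t ^ (-(1/2) : ℝ) * t ^ (-(μ - 1) / 2) := by
    rw [← Real.rpow_add ht]
    congr 1; ring
  have E3 : t ^ (-(μ - 1) / 2) * (1 + 2 * x) ^ (-(μ - 1) / 2)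
      = (r * s + t) ^ (-(μ - 1) / 2) := by
    rw [← Real.mul_rpow ht.le h2x.le]
    congr 1
    rw [hx]; field_simp; ring
  calc H r s t ≤ c * t ^ (-(μ / 2)) * Real.exp (-(r ^ 2 + s ^ 2) / (4 * t))
      * (C * Real.exp x * (1 + 2 * x) ^ (-(μ - 1) / 2)) := hmain
    _ = c * C * (Real.exp (-(r ^ 2 + s ^ 2) / (4 * t)) * Real.exp x)
        * (t ^ (-(1/2) : ℝ) * (t ^ (-(μ - 1) / 2) * (1 + 2 * x) ^ (-(μ - 1) / 2))) := by
      rw [E2]; ring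
    _ = c * C * Real.exp (-(r - s) ^ 2 / (4 * t)) * t ^ (-(1/2) : ℝ)
        * (r * s + t) ^ (-(μ - 1) / 2) := by
      rw [E1, E3]; ring
end
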